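/- arXiv:1603.05517 — 14 statements merged into one kernel-verified Lean document; each statement's English description precedes it below -/
import Mathlib

section
/- If f : M → N is an R-module homomorphism and K ≪_g M, then f(K) ≪_g N. -/
variable {R : Type*} [Ring R] {M : Type*} [AddCommGroup M] [Module R M]

/-- `T` is an essential submodule of `M`. -/
def IsEssentialSub (T : Submodule R M) : Prop :=
  ∀ L : Submodule R M, L ≠ ⊥ → T ⊓ L ≠ ⊥

/-- `K` is a generalized small submodule of `M`. -/
def GSmall (K : Submodule R M) : Prop :=
  ∀ T : Submodule R M, IsEssentialSub T → K ⊔ T = ⊤ → T = ⊤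

/-- `T` is an essential submodule of the submodule `N`. -/
def EssIn (T N : Submodule R M) : Prop :=
  T ≤ N ∧ ∀ L : Submodule R M, L ≤ N → L ≠ ⊥ → T ⊓ L ≠ ⊥

/-- `K` is a generalized small submodule of the submodule `N`. -/
def GSmallIn (K N : Submodule R M) : Prop :=
  K ≤ N ∧ ∀ T : Submodule R M, EssIn T N → K ⊔ T = N → T = N

/-- `T` is a maximal essential submodule of the submodule `N`. -/
def MaxEssIn (T N : Submodule R M) : Prop :=
  EssIn T N ∧ T < N ∧ ∀ S : Submodule R M, T < S → S ≤ N → S = N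

/-- The generalized radical of the submodule `N`, as a submodule of `M`:
the intersection of all maximal essential submodules of `N` (equal to `N` if none exist). -/
def RadgIn (N : Submodule R M) : Submodule R M :=
  sInf {T : Submodule R M | MaxEssIn T N} ⊓ N

/-- The generalized radical of the module `M`: the intersection of all maximal essential
submodules of `M` (equal to `M` if none exist). -/
def Radg (R M : Type*) [Ring R] [AddCommGroup M] [Module R M] : Submodule R M :=
  sInf {T : Submodule R M | IsEssentialSub T ∧ IsCoatom T}

/-- `V` is a g-radical supplement of `U` in the submodule `N` (with `N = ⊤` for `M` itself). -/
def GRadSuppIn (U V N : Submodule R M) : Prop :=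
  U ⊔ V = N ∧ U ⊓ V ≤ RadgIn V

/-- `M` is a g-radical supplemented module. -/
def GRS (R M : Type*) [Ring R] [AddCommGroup M] [Module R M] : Prop :=
  ∀ U : Submodule R M, ∃ V : Submodule R M, U ⊔ V = ⊤ ∧ U ⊓ V ≤ RadgIn V

theorem stmt2 {N : Type*} [AddCommGroup N] [Module R N] (f : M →ₗ[R] N)
    (K : Submodule R M) (hK : GSmall K) : GSmall (K.map f) := by
  intro T hT hsup
  -- comap f T is essential in M
  have hcom : IsEssentialSub (T.comap f) := by
    intro L hL hbot
    by_cases hLk : L ≤ LinearMap.ker f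
    · apply hL
      rw [Submodule.eq_bot_iff] at hbot ⊢
      intro x hx
      refine hbot x ⟨?_, hx⟩
      have : f x = 0 := hLk hx
      simp [Submodule.mem_comap, this]
    · have hmap : L.map f ≠ ⊥ := by
        intro h
        exact hLk (fun x hx => by
          have : f x ∈ L.map f := Submodule.mem_map_of_mem hx
          rw [h] at this
          simpa [LinearMap.mem_ker] using this)
      have := hT _ hmap
      apply this
      rw [Submodule.eq_bot_iff] at hbot ⊢
      rintro y ⟨hyT, x, hxL, rfl⟩
      rw [hbot x ⟨hyT, hxL⟩]
      exact map_zero f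
  have hsup' : K ⊔ T.comap f = ⊤ := by
    rw [eq_top_iff]
    intro m _
    have : f m ∈ K.map f ⊔ T := hsup ▸ Submodule.mem_top
    obtain ⟨y, ⟨k, hk, rfl⟩, t, ht, hmt⟩ := Submodule.mem_sup.mp this
    refine Submodule.mem_sup.mpr ⟨k, hk, m - k, ?_, by abel⟩
    have : f (m - k) = t := by rw [map_sub]; rw [← hmt]; abel
    simpa [Submodule.mem_comap, this] using ht
  have htop := hK _ hcom hsup'
  have hrange : LinearMap.range f ≤ T := by
    rintro y ⟨x, rfl⟩
    have : x ∈ T.comap f := htop ▸ Submodule.mem_top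
    exact this
  rw [eq_top_iff, ← hsup, sup_le_iff]
  exact ⟨le_trans (LinearMap.map_le_range) hrange, le_refl T⟩
end

section
/- If K, L, N, T are submodules of M with K ≪_g L and N ≪_g T, then K + N ≪_g L + T. -/
variable {R : Type*} [Ring R] {M : Type*} [AddCommGroup M] [Module R M]

lemma essIn_of_le {S S' L : Submodule R M} (h : EssIn S L) (hS : S ≤ S') (hS' : S' ≤ L) :
    EssIn S' L := by
  refine ⟨hS', fun X hXL hX hb => h.2 X hXL hX (le_bot_iff.1 ?_)⟩
  exact le_trans (inf_le_inf_right X hS) hb.le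

lemma gsmallIn_of_le {K L L' : Submodule R M} (h : GSmallIn K L) (hLL : L ≤ L') :
    GSmallIn K L' := by
  refine ⟨h.1.trans hLL, fun S hS hKS => ?_⟩
  have hKL : K ≤ L := h.1
  have hmod : L ⊓ S ⊔ K = L ⊓ (S ⊔ K) := inf_sup_assoc_of_le S hKL
  have hLeq : K ⊔ (L ⊓ S) = L := by
    rw [sup_comm, hmod, sup_comm, hKS, inf_eq_left.2 hLL]
  have hess : EssIn (L ⊓ S) L := by
    refine ⟨inf_le_left, fun X hXL hX hb => hS.2 X (hXL.trans hLL) hX ?_⟩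
    rw [inf_comm L S, inf_assoc, inf_eq_right.2 hXL] at hb
    exact hb
  have := h.2 (L ⊓ S) hess hLeq
  have hLS : L ≤ S := by rw [← this]; exact inf_le_right
  rw [← hKS]
  exact (sup_eq_right.2 (hKL.trans hLS)).symm

lemma gsmallIn_sup {K N L : Submodule R M} (h1 : GSmallIn K L) (h2 : GSmallIn N L) :
    GSmallIn (K ⊔ N) L := by
  refine ⟨sup_le h1.1 h2.1, fun S hS hKS => ?_⟩
  have hNS : N ⊔ S = L := by
    apply h1.2 (N ⊔ S) (essIn_of_le hS le_sup_right (sup_le h2.1 hS.1))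
    rw [← sup_assoc]; exact hKS
  exact h2.2 S hS hNS

theorem stmt3 (K L N T : Submodule R M) (h1 : GSmallIn K L) (h2 : GSmallIn N T) :
    GSmallIn (K ⊔ N) (L ⊔ T) :=
  gsmallIn_sup (gsmallIn_of_le h1 le_sup_left) (gsmallIn_of_le h2 le_sup_right)
end

section
/- If K ≤ N ≤ M and N ≪_g M, then N/K ≪_g M/K. -/
variable {R : Type*} [Ring R] {M : Type*} [AddCommGroup M] [Module R M]

theorem stmt4 (K N : Submodule R M) (hKN : K ≤ N) (hN : GSmall N) :
    GSmall (N.map K.mkQ) := by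
  intro T' hT' hsup
  set T : Submodule R M := T'.comap K.mkQ with hT
  have hKT : K ≤ T := by
    intro x hx
    show K.mkQ x ∈ T'
    rw [show K.mkQ x = 0 from (Submodule.Quotient.mk_eq_zero K).2 hx]
    exact T'.zero_mem
  have hmapT : T.map K.mkQ = T' :=
    Submodule.map_comap_eq_of_surjective (Submodule.mkQ_surjective K) T'
  have hEss : IsEssentialSub T := by
    intro L hL hbot
    by_cases hLK : L ≤ K
    · have : T ⊓ L = L := inf_eq_right.2 (hLK.trans hKT)
      exact hL (this ▸ hbot)
    · have hLm : L.map K.mkQ ≠ ⊥ := by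
        intro h
        apply hLK
        intro x hx
        have : K.mkQ x ∈ L.map K.mkQ := Submodule.mem_map_of_mem hx
        rw [h, Submodule.mem_bot] at this
        exact (Submodule.Quotient.mk_eq_zero K).1 this
      apply hT' (L.map K.mkQ) hLm
      rw [eq_bot_iff]
      rintro x ⟨hxT', l, hlL, rfl⟩
      have hlT : l ∈ T := hxT'
      have : l ∈ T ⊓ L := ⟨hlT, hlL⟩
      rw [hbot, Submodule.mem_bot] at this
      simp [this]
  have hsupT : N ⊔ T = ⊤ := by
    have h1 : (N ⊔ T).map K.mkQ = ⊤ := by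
      rw [Submodule.map_sup, hmapT, hsup]
    have h2 := congrArg (Submodule.comap K.mkQ) h1
    rw [Submodule.comap_map_eq, Submodule.ker_mkQ, Submodule.comap_top] at h2
    rwa [sup_eq_left.2 (le_sup_of_le_left hKN : K ≤ N ⊔ T)] at h2
  have hTtop := hN T hEss hsupT
  rw [← hmapT, hTtop, Submodule.map_top, Submodule.range_mkQ]
end

section
/- If K ≪_g M and L ≤ M, then (K + L)/L ≪_g M/L. -/
variable {R : Type*} [Ring R] {M : Type*} [AddCommGroup M] [Module R M]

theorem stmt5 (K L : Submodule R M) (hK : GSmall K) :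
    GSmall ((K ⊔ L).map L.mkQ) := by
  intro T' hEss hsup
  set T : Submodule R M := T'.comap L.mkQ with hT
  have hLT : L ≤ T := by
    intro x hx
    have h0 : L.mkQ x = 0 := (Submodule.Quotient.mk_eq_zero L).2 hx
    show L.mkQ x ∈ T'
    rw [h0]; exact T'.zero_mem
  have hKT : K ⊔ T = ⊤ := by
    rw [eq_top_iff]
    intro x _
    have hx : L.mkQ x ∈ (K ⊔ L).map L.mkQ ⊔ T' := by rw [hsup]; trivial
    obtain ⟨a, ha, b, hb, hab⟩ := Submodule.mem_sup.mp hx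
    obtain ⟨k', hk', rfl⟩ := ha
    obtain ⟨k, hk, l, hl, rfl⟩ := Submodule.mem_sup.mp hk'
    have hxk : x - k ∈ T := by
      show L.mkQ (x - k) ∈ T'
      have hl0 : L.mkQ l = 0 := (Submodule.Quotient.mk_eq_zero L).2 hl
      have hb' : L.mkQ (x - k) = b := by
        simp only [map_add, hl0, add_zero, map_sub] at hab ⊢
        rw [← hab]; abel
      rw [hb']; exact hb
    have hx' : x = k + (x - k) := by abel
    rw [hx']
    exact Submodule.add_mem_sup hk hxk
  have hTe : IsEssentialSub T := by
    intro X hX hbot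
    by_cases hXL : X.map L.mkQ = ⊥
    · have hXT : X ≤ T := by
        intro x hx
        have hmem : L.mkQ x ∈ X.map L.mkQ := ⟨x, hx, rfl⟩
        rw [hXL, Submodule.mem_bot] at hmem
        show L.mkQ x ∈ T'
        rw [hmem]; exact T'.zero_mem
      rw [inf_eq_right.mpr hXT] at hbot
      exact hX hbot
    · have hne := hEss (X.map L.mkQ) hXL
      rw [Submodule.ne_bot_iff] at hne
      obtain ⟨y, ⟨hyT', hyX⟩, hy0⟩ := hne
      obtain ⟨x, hx, rfl⟩ := hyX
      have hxT : x ∈ T ⊓ X := ⟨hyT', hx⟩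
      rw [hbot, Submodule.mem_bot] at hxT
      apply hy0
      rw [hxT, map_zero]
  have hTtop : T = ⊤ := hK T hTe hKT
  rw [eq_top_iff]
  intro y _
  obtain ⟨x, rfl⟩ := L.mkQ_surjective y
  have hx : x ∈ T := by rw [hTtop]; trivial
  exact hx
end

section
/- For any R-module M, the generalized radical Rad_g M equals the sum of all generalized small submodules of M. -/
variable {R : Type*} [Ring R] {M : Type*} [AddCommGroup M] [Module R M]

theorem stmt6 : Radg R M = sSup {L : Submodule R M | GSmall L} := by
  apply le_antisymm
  · intro x hx
    have hg : GSmall (Submodule.span R {x} : Submodule R M) := by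
      intro T hT hsup
      by_contra hTne
      have hxT : x ∉ T := by
        intro h
        apply hTne
        rw [← hsup, sup_eq_right.2 ((Submodule.span_singleton_le_iff_mem x T).2 h)]
      obtain ⟨P, hTP, ⟨hTP', hxP⟩, hmax⟩ :=
        zorn_le_nonempty₀ {S : Submodule R M | T ≤ S ∧ x ∉ S}
          (fun c hc hchain y hy => by
            refine ⟨sSup c, ⟨le_trans (hc hy).1 (le_sSup hy), ?_⟩, fun z hz => le_sSup hz⟩
            intro hxs
            rcases (Submodule.mem_sSup_of_directed ⟨y, hy⟩
              (hchain.directedOn)).1 hxs with ⟨z, hzc, hxz⟩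
            exact (hc hzc).2 hxz) T ⟨le_refl T, hxT⟩
      have hco : IsCoatom P := by
        constructor
        · intro h; exact hxP (h ▸ Submodule.mem_top)
        · intro b hb
          by_cases hxb : x ∈ b
          · rw [← top_le_iff, ← hsup]
            exact sup_le ((Submodule.span_singleton_le_iff_mem x b).2 hxb)
              (le_trans hTP' hb.le)
          · exact absurd (le_antisymm (hmax ⟨le_trans hTP' hb.le, hxb⟩ hb.le) hb.le) hb.ne'
      have hess : IsEssentialSub P := by
        intro L hL hbot
        exact hT L hL (le_bot_iff.1 (hbot ▸ inf_le_inf_right L hTP'))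
      exact hxP (Submodule.mem_sInf.1 hx P ⟨hess, hco⟩)
    exact SetLike.le_def.1 (le_sSup (s := {L : Submodule R M | GSmall L}) hg) (Submodule.mem_span_singleton_self x)
  · apply sSup_le
    intro L hL
    apply le_sInf
    rintro P ⟨hPess, hPco⟩
    by_contra hnle
    have : P < L ⊔ P := lt_of_le_of_ne le_sup_right (fun h => hnle (h ▸ le_sup_left))
    exact hPco.1 (hL P hPess (hPco.2 _ this))
end

section
/- If m ∈ Rad_g M, then the cyclic submodule Rm is a generalized small submodule of M. -/
variable {R : Type*} [Ring R] {M : Type*} [AddCommGroup M] [Module R M]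

theorem stmt7 (m : M) (hm : m ∈ Radg R M) : GSmall (Submodule.span R {m}) := by
  intro T hT hsup
  by_contra hne
  by_cases hmT : m ∈ T
  · apply hne
    rw [← hsup, sup_eq_right.mpr (by simpa [Submodule.span_le] using hmT)]
  -- Zorn: maximal P with T ≤ P and m ∉ P
  have hcomp := Submodule.singleton_span_isCompactElement (R := R) m
  rw [CompleteLattice.isCompactElement_iff_le_of_directed_sSup_le] at hcomp
  obtain ⟨P, hTP, hPS, hPmax⟩ := zorn_le_nonempty₀
      {P : Submodule R M | T ≤ P ∧ m ∉ P}
      (fun c hcS hchain y hyc => by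
        refine ⟨sSup c, ⟨le_trans (hcS hyc).1 (le_sSup hyc), ?_⟩, fun z hz => le_sSup hz⟩
        intro hmem
        obtain ⟨x, hxc, hx⟩ := hcomp c ⟨y, hyc⟩ (hchain.directedOn)
          ((Submodule.span_le).2 (Set.singleton_subset_iff.2 hmem))
        exact (hcS hxc).2 (hx (Submodule.mem_span_singleton_self m)))
      T ⟨le_rfl, hmT⟩
  -- P is an essential coatom
  have hPm : m ∉ P := hPS.2
  have hcoatom : IsCoatom P := by
    constructor
    · intro h; exact hPm (h ▸ Submodule.mem_top)
    · intro Q hQ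
      have hmQ : m ∈ Q := by
        by_contra hmQ
        exact hQ.ne (le_antisymm hQ.le (hPmax ⟨le_trans hPS.1 hQ.le, hmQ⟩ hQ.le))
      rw [← top_le_iff, ← hsup]
      exact sup_le (by simpa [Submodule.span_le] using hmQ) (le_trans hPS.1 hQ.le)
  have hess : IsEssentialSub P := fun L hL h =>
    hT L hL (by rw [← le_bot_iff] at h ⊢; exact le_trans (inf_le_inf_right L hPS.1) h)
  exact hPm (Submodule.mem_sInf.mp hm P ⟨hess, hcoatom⟩)
end

section
/- If f : M → N is an R-module homomorphism, then f(Rad_g M) ≤ Rad_g N. -/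
variable {R : Type*} [Ring R] {M : Type*} [AddCommGroup M] [Module R M]

theorem stmt9 {N : Type*} [AddCommGroup N] [Module R N] (f : M →ₗ[R] N) :
    (Radg R M).map f ≤ Radg R N := by
  rw [Radg]
  apply le_sInf
  rintro T ⟨hEss, hCo⟩
  rw [Submodule.map_le_iff_le_comap]
  by_cases hK : T.comap f = ⊤
  · rw [hK]; exact le_top
  · apply sInf_le
    refine ⟨?_, hK, ?_⟩
    · -- essential
      intro L hL hbot
      rcases (Submodule.ne_bot_iff L).mp hL with ⟨x, hxL, hx0⟩
      by_cases hfL : L.map f = ⊥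
      · have hsub : L ≤ T.comap f := fun y hy => by
          have hy' : f y ∈ L.map f := ⟨y, hy, rfl⟩
          rw [hfL] at hy'
          simp [Submodule.mem_comap, (Submodule.mem_bot R).mp hy']
        have hx : x ∈ T.comap f ⊓ L := ⟨hsub hxL, hxL⟩
        rw [hbot] at hx
        exact hx0 ((Submodule.mem_bot R).mp hx)
      · rcases (Submodule.ne_bot_iff _).mp (hEss (L.map f) hfL) with
          ⟨y, ⟨hyT, hyL⟩, hy0⟩
        rcases hyL with ⟨z, hzL, rfl⟩
        have hz : z ∈ T.comap f ⊓ L := ⟨hyT, hzL⟩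
        rw [hbot] at hz
        rw [(Submodule.mem_bot R).mp hz] at hy0
        exact hy0 (map_zero f)
    · -- coatom
      intro S hS
      have hex : ∃ x ∈ S, f x ∉ T := by
        by_contra h
        push_neg at h
        exact (lt_irrefl _) (lt_of_lt_of_le hS (fun y hy => h y hy))
      rcases hex with ⟨x, hxS, hxT⟩
      have htop : T ⊔ S.map f = ⊤ := by
        apply hCo.2
        refine lt_of_le_of_ne le_sup_left (fun h => hxT ?_)
        rw [h]
        exact Submodule.mem_sup_right (Submodule.mem_map_of_mem hxS)
      rw [eq_top_iff]
      intro m _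
      have hm : f m ∈ T ⊔ S.map f := htop ▸ Submodule.mem_top
      rcases Submodule.mem_sup.mp hm with ⟨t, ht, s, hs, heq⟩
      rcases hs with ⟨s', hs', rfl⟩
      have hmc : m - s' ∈ T.comap f := by
        simp only [Submodule.mem_comap, map_sub]
        rw [← heq]; simpa using ht
      have hms : m - s' ∈ S := le_of_lt hS hmc
      have := S.add_mem hms hs'
      simpa using this
end

section
/- If M = ⊕_{i∈I} M_i is a direct sum of submodules, then Rad_g M = ⊕_{i∈I} Rad_g M_i. -/
variable {R : Type*} [Ring R] {M : Type*} [AddCommGroup M] [Module R M]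

open Submodule

/-- Elementwise version of `EssIn`. -/
lemma essIn_smul {T N : Submodule R M} (h : EssIn T N) {a : M} (ha : a ∈ N) (ha0 : a ≠ 0) :
    ∃ r : R, r • a ∈ T ∧ r • a ≠ 0 := by
  have hL : Submodule.span R {a} ≤ N := (span_singleton_le_iff_mem a N).mpr ha
  have hne : Submodule.span R {a} ≠ ⊥ := by
    simpa [Submodule.span_singleton_eq_bot] using ha0
  obtain ⟨y, hy, hy0⟩ := (Submodule.ne_bot_iff _).mp (h.2 _ hL hne)
  obtain ⟨hyT, hys⟩ := Submodule.mem_inf.mp hy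
  obtain ⟨r, rfl⟩ := Submodule.mem_span_singleton.mp hys
  exact ⟨r, hyT, hy0⟩

/-- No element of a chain in `{P | T ≤ P ∧ P ≤ N ∧ x ∉ P}` loses these properties at `sSup`. -/
lemma zorn_chain_ub {N T : Submodule R M} {x : M}
    (c : Set (Submodule R M)) (hc : c ⊆ {P | T ≤ P ∧ P ≤ N ∧ x ∉ P})
    (hchain : IsChain (· ≤ ·) c) {y : Submodule R M} (hy : y ∈ c) :
    sSup c ∈ {P | T ≤ P ∧ P ≤ N ∧ x ∉ P} := by
  refine ⟨(hc hy).1.trans (le_sSup hy), sSup_le fun z hz => (hc hz).2.1, fun hx => ?_⟩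
  have hspan : Submodule.span R {x} ≤ sSup c := (span_singleton_le_iff_mem x _).mpr hx
  obtain ⟨p, hpc, hple⟩ :=
    (CompleteLattice.isCompactElement_iff_le_of_directed_sSup_le (Submodule R M) (Submodule.span R {x})).mp
      (Submodule.singleton_span_isCompactElement x) c ⟨y, hy⟩ hchain.directedOn hspan
  exact (hc hpc).2.2 (hple (Submodule.mem_span_singleton_self x))

/-- If `x` lies in every maximal essential submodule of `N` (and in `N`), then
`span R {x}` is g-small in `N`. -/
lemma span_gSmallIn {N : Submodule R M} {x : M} (hxN : x ∈ N)
    (hx : ∀ P : Submodule R M, MaxEssIn P N → x ∈ P) :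
    GSmallIn (Submodule.span R {x}) N := by
  refine ⟨(span_singleton_le_iff_mem x N).mpr hxN, fun T hT hsup => ?_⟩
  by_contra hTN
  have hxT : x ∉ T := by
    intro hxT
    apply hTN
    rw [← hsup, sup_eq_right.mpr ((span_singleton_le_iff_mem x T).mpr hxT)]
  obtain ⟨P, hTP, hPS, hPmax⟩ :=
    zorn_le_nonempty₀ {P : Submodule R M | T ≤ P ∧ P ≤ N ∧ x ∉ P}
      (fun c hc hchain y hy => ⟨sSup c, zorn_chain_ub c hc hchain hy, fun z hz => le_sSup hz⟩)
      T ⟨le_rfl, hT.1, hxT⟩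
  have hPM : MaxEssIn P N := by
    refine ⟨⟨hPS.2.1, fun L hLN hL0 hPL => hT.2 L hLN hL0 (le_bot_iff.mp ?_)⟩, ?_, ?_⟩
    · exact hPL ▸ inf_le_inf_right L hPS.1
    · exact lt_of_le_of_ne hPS.2.1 fun h => hPS.2.2 (h ▸ hxN)
    · intro S hPSlt hSN
      have hxS : x ∈ S := by
        by_contra hxS
        exact hPSlt.ne (le_antisymm hPSlt.le (hPmax ⟨hPS.1.trans hPSlt.le, hSN, hxS⟩ hPSlt.le))
      refine le_antisymm hSN ?_
      rw [← hsup]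
      exact sup_le ((span_singleton_le_iff_mem x S).mpr hxS) (hPS.1.trans hPSlt.le)
  exact hPS.2.2 (hx P hPM)

/-- If `x ∈ Radg R M`, then `span R {x}` is g-small in `M`. -/
lemma span_gSmall {x : M} (hx : x ∈ Radg R M) : GSmall (Submodule.span R {x}) := by
  intro T hT hsup
  by_contra hTN
  have hxT : x ∉ T := by
    intro hxT
    apply hTN
    rw [← hsup, sup_eq_right.mpr ((span_singleton_le_iff_mem x T).mpr hxT)]
  obtain ⟨P, hTP, hPS, hPmax⟩ :=
    zorn_le_nonempty₀ {P : Submodule R M | T ≤ P ∧ P ≤ (⊤ : Submodule R M) ∧ x ∉ P}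
      (fun c hc hchain y hy => ⟨sSup c, zorn_chain_ub c hc hchain hy, fun z hz => le_sSup hz⟩)
      T ⟨le_rfl, le_top, hxT⟩
  have hPM : IsEssentialSub P ∧ IsCoatom P := by
    refine ⟨fun L hL0 hPL => hT L hL0 (le_bot_iff.mp (hPL ▸ inf_le_inf_right L hPS.1)), ?_, ?_⟩
    · exact fun h => hPS.2.2 (h ▸ Submodule.mem_top)
    · intro S hPSlt
      have hxS : x ∈ S := by
        by_contra hxS
        exact hPSlt.ne (le_antisymm hPSlt.le (hPmax ⟨hPS.1.trans hPSlt.le, le_top, hxS⟩ hPSlt.le))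
      refine le_antisymm le_top ?_
      rw [← hsup]
      exact sup_le ((span_singleton_le_iff_mem x S).mpr hxS) (hPS.1.trans hPSlt.le)
  exact hPS.2.2 (Submodule.mem_sInf.mp hx P hPM)

/-- A g-small submodule of a submodule `N` is g-small in `M`. -/
lemma gSmall_of_gSmallIn {K N : Submodule R M} (hK : GSmallIn K N) : GSmall K := by
  intro T hT hsup
  have hess : EssIn (T ⊓ N) N := by
    refine ⟨inf_le_right, fun L hLN hL0 h => hT L hL0 (le_bot_iff.mp ?_)⟩
    have : T ⊓ L = T ⊓ N ⊓ L := by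
      rw [inf_assoc, inf_eq_right.mpr hLN]
    exact this ▸ h.le
  have hmod : K ⊔ T ⊓ N = N := by
    have := sup_inf_assoc_of_le T hK.1
    rw [hsup, top_inf_eq] at this
    exact this.symm
  have hNT : N ≤ T := inf_eq_right.mp (hK.2 _ hess hmod)
  rw [← hsup, sup_eq_right.mpr (hK.1.trans hNT)]

/-- A g-small submodule of `M` is contained in `Radg R M`. -/
lemma gSmall_le_radg {K : Submodule R M} (hK : GSmall K) : K ≤ Radg R M := by
  refine le_sInf fun T hT => ?_
  by_contra hKT
  have hlt : T < K ⊔ T := lt_of_le_of_ne le_sup_right fun h => hKT (h ▸ le_sup_left)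
  exact hT.2.1 (hK T hT.1 (hT.2.2 _ hlt))

/-- A g-small submodule of `N` is contained in `RadgIn N`. -/
lemma gSmallIn_le_radgIn {K N : Submodule R M} (hK : GSmallIn K N) : K ≤ RadgIn N := by
  refine le_inf (le_sInf fun P hP => ?_) hK.1
  by_contra hKP
  have hlt : P < K ⊔ P := lt_of_le_of_ne le_sup_right fun h => hKP (h ▸ le_sup_left)
  exact hP.2.1.ne (hK.2 P hP.1 (hP.2.2 _ hlt (sup_le hK.1 hP.1.1)))

theorem stmt11 {ι : Type*} (M_ : ι → Submodule R M) (hind : iSupIndep M_)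
    (hsum : ⨆ i, M_ i = ⊤) : Radg R M = ⨆ i, RadgIn (M_ i) := by
  apply le_antisymm
  · -- Radg ≤ ⨆ RadgIn (M_ i)
    intro x hx
    have hxtop : x ∈ ⨆ i, M_ i := hsum ▸ Submodule.mem_top
    obtain ⟨f, hf, hfx⟩ := (Submodule.mem_iSup_iff_exists_finsupp M_ x).mp hxtop
    classical
    have key : ∀ i, f i ∈ RadgIn (M_ i) := by
      intro i
      set C : Submodule R M := ⨆ j, ⨆ (_ : j ≠ i), M_ j with hC
      have hdisj : Disjoint (M_ i) C := hind i
      have htop : M_ i ⊔ C = ⊤ := by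
        refine le_antisymm le_top ?_
        rw [← hsum]
        refine iSup_le fun j => ?_
        by_cases hji : j = i
        · exact hji ▸ le_sup_left
        · exact le_sup_of_le_right (le_iSup_of_le j (le_iSup_of_le hji le_rfl))
      -- f i = x - ∑ over support.erase i
      have hsplit : f i = x - ∑ j ∈ f.support.erase i, f j := by
        by_cases hi : i ∈ f.support
        · rw [← hfx, Finsupp.sum, ← Finset.sum_erase_add _ _ hi]
          abel
        · rw [Finset.erase_eq_of_notMem hi, ← hfx, Finsupp.sum,
            Finsupp.notMem_support_iff.mp hi]
          abel
      have hsumC : (∑ j ∈ f.support.erase i, f j) ∈ C := by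
        refine Submodule.sum_mem _ fun j hj => ?_
        have hji : j ≠ i := Finset.ne_of_mem_erase hj
        exact (le_iSup_of_le j (le_iSup_of_le hji le_rfl) : M_ j ≤ C) (hf j)
      -- span {f i} is g-small in M_ i
      have hgs : GSmallIn (Submodule.span R {f i}) (M_ i) := by
        refine ⟨(span_singleton_le_iff_mem _ _).mpr (hf i), fun T hT hsup => ?_⟩
        set T'' : Submodule R M := T ⊔ C with hT''
        have hE : IsEssentialSub T'' := by
          intro L hL0 hbot
          obtain ⟨y, hyL, hy0⟩ := (Submodule.ne_bot_iff _).mp hL0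
          obtain ⟨a, haM, c, hcC, hac⟩ :=
            Submodule.mem_sup.mp (htop ▸ Submodule.mem_top : y ∈ M_ i ⊔ C)
          by_cases ha : a = 0
          · have hyC : y ∈ T'' := le_sup_right (α := Submodule R M) (by
              rw [← hac, ha, zero_add]; exact hcC)
            have : y ∈ T'' ⊓ L := Submodule.mem_inf.mpr ⟨hyC, hyL⟩
            rw [hbot] at this
            exact hy0 this
          · obtain ⟨r, hrT, hr0⟩ := essIn_smul hT haM ha
            have hry : r • y = r • a + r • c := by rw [← hac, smul_add]
            have hryT : r • y ∈ T'' := by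
              rw [hry]
              exact Submodule.add_mem _ (le_sup_left (α := Submodule R M) hrT)
                (le_sup_right (α := Submodule R M) (Submodule.smul_mem _ r hcC))
            have hry0 : r • y ≠ 0 := by
              intro h
              apply hr0
              have hmem : r • a ∈ M_ i ⊓ C := by
                refine Submodule.mem_inf.mpr ⟨Submodule.smul_mem _ r haM, ?_⟩
                have : r • a = -(r • c) := by
                  have := h
                  rw [hry] at this
                  linear_combination (norm := abel) this
                rw [this]
                exact Submodule.neg_mem _ (Submodule.smul_mem _ r hcC)
              rw [(disjoint_iff.mp hdisj : M_ i ⊓ C = ⊥)] at hmem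
              exact hmem
            have : r • y ∈ T'' ⊓ L := Submodule.mem_inf.mpr ⟨hryT, Submodule.smul_mem _ r hyL⟩
            rw [hbot] at this
            exact hry0 this
        have hxspan : Submodule.span R {f i} ≤ Submodule.span R {x} ⊔ C := by
          refine (span_singleton_le_iff_mem _ _).mpr ?_
          rw [hsplit]
          exact Submodule.sub_mem _
            (le_sup_left (α := Submodule R M) (Submodule.mem_span_singleton_self x))
            (le_sup_right (α := Submodule R M) hsumC)
        have hsup2 : Submodule.span R {x} ⊔ T'' = ⊤ := by
          refine le_antisymm le_top ?_
          rw [← hsum]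
          refine iSup_le fun j => ?_
          by_cases hji : j = i
          · subst hji
            rw [← hsup]
            refine sup_le (hxspan.trans (sup_le le_sup_left ?_)) ?_
            · exact le_sup_of_le_right (le_sup_right (a := T))
            · exact le_sup_of_le_right (le_sup_left (b := C))
          · exact le_sup_of_le_right
              (le_sup_of_le_right (le_iSup_of_le j (le_iSup_of_le hji le_rfl)))
        have hTtop : T'' = ⊤ := span_gSmall hx T'' hE hsup2
        refine le_antisymm hT.1 fun a haM => ?_
        obtain ⟨t, htT, c, hcC, htc⟩ :=
          Submodule.mem_sup.mp (show a ∈ T ⊔ C by rw [← hT'', hTtop]; exact Submodule.mem_top)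
        have hat : a - t ∈ M_ i := Submodule.sub_mem _ haM (hT.1 htT)
        have hatC : a - t ∈ C := by
          have : a - t = c := by rw [← htc]; abel
          rw [this]; exact hcC
        have : a - t = 0 := Submodule.disjoint_def.mp hdisj _ hat hatC
        have : a = t := by linear_combination (norm := abel) this
        rw [this]; exact htT
      exact gSmallIn_le_radgIn hgs (Submodule.mem_span_singleton_self (f i))
    rw [← hfx, Finsupp.sum]
    exact Submodule.sum_mem _ fun j _ =>
      (le_iSup (fun i => RadgIn (M_ i)) j : RadgIn (M_ j) ≤ _) (key j)
  · -- ⨆ RadgIn (M_ i) ≤ Radg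
    refine iSup_le fun i x hx => ?_
    obtain ⟨hx1, hx2⟩ := Submodule.mem_inf.mp hx
    have hgs : GSmallIn (Submodule.span R {x}) (M_ i) :=
      span_gSmallIn hx2 fun P hP => Submodule.mem_sInf.mp hx1 P hP
    exact gSmall_le_radg (gSmall_of_gSmallIn hgs) (Submodule.mem_span_singleton_self x)
end

section
/- Let M_1, U, X ≤ M and Y ≤ M_1. If X is a g-radical supplement of M_1 + U in M and Y is a g-radical supplement of (U + X) ∩ M_1 in M_1, then X + Y is a g-radical supplement of U in M. -/
variable {R : Type*} [Ring R] {M : Type*} [AddCommGroup M] [Module R M]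

open Submodule

/-- If `x` lies in every maximal essential submodule of `A` (and in `A`), then `R∙x` is
g-small in `A`. -/
lemma span_singleton_gSmallIn_aux {A : Submodule R M} {x : M} (hxA : x ∈ A)
    (hx : ∀ T : Submodule R M, MaxEssIn T A → x ∈ T) : GSmallIn (R ∙ x) A := by
  refine ⟨(span_singleton_le_iff_mem x A).2 hxA, ?_⟩
  intro T hT hsup
  by_contra hTA
  have hxT : x ∉ T := by
    intro hxT
    exact hTA (by rw [← hsup]; exact (sup_eq_right.2 ((span_singleton_le_iff_mem x T).2 hxT)).symm)
  -- Zorn: find a submodule maximal with respect to containing T, inside A, avoiding x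
  set S : Set (Submodule R M) := {T' | T ≤ T' ∧ T' ≤ A ∧ x ∉ T'} with hS
  obtain ⟨m, -, hmS, hmax⟩ := zorn_le_nonempty₀ S (fun c hcS hc y hyc => by
    refine ⟨sSup c, ⟨?_, ?_, ?_⟩, fun z hz => le_sSup hz⟩
    · exact le_trans (hcS hyc).1 (le_sSup hyc)
    · exact sSup_le fun z hz => (hcS hz).2.1
    · intro hxs
      obtain ⟨p, hpc, hxp⟩ := (mem_sSup_of_directed ⟨y, hyc⟩ hc.directedOn).1 hxs
      exact (hcS hpc).2.2 hxp) T ⟨le_rfl, hT.1, hxT⟩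
  obtain ⟨hTm, hmA, hxm⟩ := hmS
  have hMax : MaxEssIn m A := by
    refine ⟨⟨hmA, fun L hLA hL hbot => hT.2 L hLA hL (le_bot_iff.1 ?_)⟩,
      lt_of_le_of_ne hmA (fun h => hxm (h ▸ hxA)), fun s hms hsA => ?_⟩
    · calc T ⊓ L ≤ m ⊓ L := inf_le_inf_right L hTm
        _ = ⊥ := hbot
    · -- s strictly above m, below A : must equal A
      have hxs : x ∈ s := by
        by_contra hxs
        exact hms.ne (le_antisymm hms.le (hmax ⟨hTm.trans hms.le, hsA, hxs⟩ hms.le))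
      refine le_antisymm hsA ?_
      rw [← hsup]
      exact sup_le ((span_singleton_le_iff_mem x s).2 hxs) (hTm.trans hms.le)
  exact hxm (hx m hMax)

/-- A g-small submodule of `A` is g-small in any larger `B`. -/
lemma gSmallIn_of_le {K A B : Submodule R M} (hK : GSmallIn K A) (hAB : A ≤ B) :
    GSmallIn K B := by
  refine ⟨hK.1.trans hAB, fun T hT hsup => ?_⟩
  have hmod : K ⊔ (T ⊓ A) = A := by
    rw [← sup_inf_assoc_of_le T hK.1, hsup, inf_eq_right.2 hAB]
  have hEss : EssIn (T ⊓ A) A := by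
    refine ⟨inf_le_right, fun L hLA hL hbot => hT.2 L (hLA.trans hAB) hL (le_bot_iff.1 ?_)⟩
    calc T ⊓ L = (T ⊓ A) ⊓ L := by rw [inf_assoc, inf_eq_right.2 hLA]
      _ = ⊥ := hbot
      _ ≤ ⊥ := le_rfl
  have hTA : A ≤ T := by
    have := hK.2 (T ⊓ A) hEss hmod
    rw [← this]; exact inf_le_left
  rw [← hsup]
  exact (sup_eq_right.2 (hK.1.trans hTA)).symm

/-- Monotonicity of the generalized radical. -/
lemma radgIn_mono {A B : Submodule R M} (h : A ≤ B) : RadgIn A ≤ RadgIn B := by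
  intro x hx
  rw [RadgIn, mem_inf] at hx ⊢
  obtain ⟨hx1, hxA⟩ := hx
  have hsm : GSmallIn (R ∙ x) A :=
    span_singleton_gSmallIn_aux hxA (fun T hT => mem_sInf.1 hx1 T hT)
  have hsmB := gSmallIn_of_le hsm h
  refine ⟨mem_sInf.2 fun T hT => ?_, h hxA⟩
  by_contra hxT
  have hxmem : x ∈ (R ∙ x) ⊔ T := mem_sup_left (mem_span_singleton_self x)
  have hlt : T < (R ∙ x) ⊔ T := lt_of_le_of_ne le_sup_right (fun he => hxT (he ▸ hxmem))
  have hsupB : (R ∙ x) ⊔ T = B := hT.2.2 _ hlt (sup_le hsmB.1 hT.1.1)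
  exact hT.2.1.ne (hsmB.2 T hT.1 hsupB)

lemma inf_sup_decomp (U X Y : Submodule R M) :
    U ⊓ (X ⊔ Y) ≤ ((U ⊔ Y) ⊓ X) ⊔ ((U ⊔ X) ⊓ Y) := by
  rintro z hz
  rw [mem_inf] at hz
  obtain ⟨hzU, hzXY⟩ := hz
  obtain ⟨a, haX, b, hbY, rfl⟩ := mem_sup.1 hzXY
  refine mem_sup.2 ⟨a, mem_inf.2 ⟨?_, haX⟩, b, mem_inf.2 ⟨?_, hbY⟩, rfl⟩
  · have : a = (a + b) - b := by abel
    rw [this]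
    exact sub_mem (mem_sup_left hzU) (mem_sup_right hbY)
  · have : b = (a + b) - a := by abel
    rw [this]
    exact sub_mem (mem_sup_left hzU) (mem_sup_right haX)

theorem stmt13 (M₁ U X Y : Submodule R M) (hY : Y ≤ M₁)
    (hX : GRadSuppIn (M₁ ⊔ U) X ⊤) (hYsupp : GRadSuppIn ((U ⊔ X) ⊓ M₁) Y M₁) :
    GRadSuppIn U (X ⊔ Y) ⊤ := by
  obtain ⟨hX1, hX2⟩ := hX
  obtain ⟨hYs1, hYs2⟩ := hYsupp
  constructor
  · -- sup part
    have hM1 : M₁ ≤ U ⊔ (X ⊔ Y) := by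
      rw [← hYs1]
      refine sup_le (inf_le_left.trans (sup_le le_sup_left ?_)) ?_
      · exact le_sup_left.trans le_sup_right
      · exact le_sup_right.trans le_sup_right
    rw [eq_top_iff, ← hX1]
    exact sup_le (sup_le hM1 le_sup_left) (le_sup_left.trans le_sup_right)
  · -- inf part
    refine le_trans (inf_sup_decomp U X Y) (sup_le ?_ ?_)
    · refine le_trans ?_ (le_trans hX2 (radgIn_mono le_sup_left))
      exact inf_le_inf_right X (sup_le (le_sup_left.trans (sup_comm _ _).le) (hY.trans le_sup_left))
    · refine le_trans ?_ (le_trans hYs2 (radgIn_mono le_sup_right))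
      intro z hz
      rw [mem_inf] at hz ⊢
      exact ⟨mem_inf.2 ⟨hz.1, hY hz.2⟩, hz.2⟩
end

section
/- Let U, V ≤ M and K ≤ U. If V is a g-radical supplement of U in M, then (V + K)/K is a g-radical supplement of U/K in M/K. -/
variable {R : Type*} [Ring R] {M : Type*} [AddCommGroup M] [Module R M]

lemma aux_map_VK (V K : Submodule R M) : (V ⊔ K).map K.mkQ = V.map K.mkQ := by
  rw [Submodule.map_sup]
  have hK : K.map K.mkQ = ⊥ := by
    rw [eq_bot_iff, Submodule.map_le_iff_le_comap, Submodule.comap_bot, Submodule.ker_mkQ]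
  rw [hK, sup_bot_eq]

lemma aux_pullback (V K : Submodule R M) {T' : Submodule R (M ⧸ K)}
    (h : MaxEssIn T' ((V ⊔ K).map K.mkQ)) :
    MaxEssIn (V ⊓ T'.comap K.mkQ) V ∧ (V ⊓ T'.comap K.mkQ).map K.mkQ = T' := by
  set q := K.mkQ
  set T : Submodule R M := V ⊓ T'.comap q with hT
  have hV' : (V ⊔ K).map q = V.map q := aux_map_VK V K
  have hT'le : T' ≤ V.map q := hV' ▸ h.1.1
  have hVK : V ⊓ K ≤ T := by
    refine le_inf inf_le_left ?_
    intro x hx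
    have : q x = 0 := by
      have : x ∈ LinearMap.ker q := by rw [Submodule.ker_mkQ]; exact hx.2
      exact this
    simp [Submodule.mem_comap, this]
  have hmapT : T.map q = T' := by
    apply le_antisymm
    · rintro _ ⟨x, hx, rfl⟩
      exact hx.2
    · intro y hy
      obtain ⟨v, hv, rfl⟩ := hT'le hy
      exact ⟨v, ⟨hv, hy⟩, rfl⟩
  have hTV : T < V := by
    refine lt_of_le_of_ne inf_le_left ?_
    intro hTVeq
    rw [hTVeq] at hmapT
    exact absurd (hV'.trans hmapT) (ne_of_gt h.2.1)
  refine ⟨⟨⟨inf_le_left, ?_⟩, hTV, ?_⟩, hmapT⟩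
  · -- essential
    intro L hLV hL
    by_cases hKL : K ⊓ L = ⊥
    · have hmapL : L.map q ≠ ⊥ := by
        intro hb
        apply hL
        rw [eq_bot_iff] at hb ⊢
        intro x hx
        have hxK : x ∈ K := by
          have := hb ⟨x, hx, rfl⟩
          have : q x = 0 := by simpa using this
          rwa [← Submodule.ker_mkQ K]
        have : x ∈ K ⊓ L := ⟨hxK, hx⟩
        rw [hKL] at this
        exact this
      have hmapLle : L.map q ≤ (V ⊔ K).map q := by
        rw [hV']; exact Submodule.map_mono hLV
      have := h.1.2 (L.map q) hmapLle hmapL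
      obtain ⟨y, ⟨hyT', ⟨l, hl, rfl⟩⟩, hy0⟩ := (T' ⊓ L.map q).ne_bot_iff.mp this
      refine (T ⊓ L).ne_bot_iff.mpr ⟨l, ⟨⟨hLV hl, hyT'⟩, hl⟩, ?_⟩
      rintro rfl
      exact hy0 (map_zero q)
    · obtain ⟨x, ⟨hxK, hxL⟩, hx0⟩ := (K ⊓ L).ne_bot_iff.mp hKL
      exact (T ⊓ L).ne_bot_iff.mpr ⟨x, ⟨hVK ⟨hLV hxL, hxK⟩, hxL⟩, hx0⟩
  · -- maximality
    intro S hTS hSV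
    obtain ⟨s, hsS, hsT⟩ := SetLike.exists_of_lt hTS
    have hqs : q s ∉ T' := fun hc => hsT ⟨hSV hsS, hc⟩
    have hlt : T' < S.map q := by
      refine lt_of_le_of_ne ?_ ?_
      · rw [← hmapT]; exact Submodule.map_mono hTS.le
      · intro hc; exact hqs (hc ▸ ⟨s, hsS, rfl⟩)
    have hSle : S.map q ≤ (V ⊔ K).map q := by
      rw [hV']; exact Submodule.map_mono hSV
    have hS' := h.2.2 (S.map q) hlt hSle
    rw [hV'] at hS'
    apply le_antisymm hSV
    intro v hv
    have : q v ∈ S.map q := hS' ▸ ⟨v, hv, rfl⟩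
    obtain ⟨s', hs', hqs'⟩ := this
    have hvs : v - s' ∈ K := by
      rw [← Submodule.ker_mkQ K]
      simp only [LinearMap.mem_ker, map_sub]
      rw [hqs', sub_self]
    have : v - s' ∈ T := hVK ⟨sub_mem hv (hSV hs'), hvs⟩
    have : v - s' ∈ S := hTS.le this
    simpa using add_mem this hs'

theorem stmt15 (U V K : Submodule R M) (hKU : K ≤ U)
    (hV : GRadSuppIn U V ⊤) :
    GRadSuppIn (U.map K.mkQ) ((V ⊔ K).map K.mkQ) ⊤ := by
  set q := K.mkQ
  obtain ⟨hsup, hrad⟩ := hV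
  constructor
  · rw [← Submodule.map_sup, ← sup_assoc, hsup, top_sup_eq, Submodule.map_top,
      Submodule.range_mkQ]
  · -- intersection
    have hint : U.map q ⊓ (V ⊔ K).map q ≤ (U ⊓ V).map q := by
      intro x ⟨⟨u, hu, hux⟩, ⟨w, hw, hwx⟩⟩
      obtain ⟨v, hv, k, hk, rfl⟩ := Submodule.mem_sup.mp hw
      have hqk : q k = 0 := by
        have : k ∈ LinearMap.ker q := by rw [Submodule.ker_mkQ]; exact hk
        exact this
      have hxv : x = q v := by rw [← hwx]; simp [hqk]
      have huv : u - v ∈ K := by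
        rw [← Submodule.ker_mkQ K]
        simp only [LinearMap.mem_ker, map_sub]
        rw [hux, hxv, sub_self]
      have hvU : v ∈ U := by
        have := sub_mem hu (hKU huv)
        simpa using this
      exact ⟨v, ⟨hvU, hv⟩, hxv.symm⟩
    refine le_trans hint ?_
    rw [RadgIn]
    refine le_inf ?_ ?_
    · refine le_sInf ?_
      rintro T' hT'
      obtain ⟨hmax, hmap⟩ := aux_pullback V K hT'
      have h1 : U ⊓ V ≤ V ⊓ T'.comap q := by
        refine le_trans hrad ?_
        refine le_trans (inf_le_left (b := V)) (sInf_le hmax)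
      rw [← hmap]
      exact Submodule.map_mono h1
    · rw [aux_map_VK]
      exact Submodule.map_mono inf_le_right
end

section
/- Every factor module of a g-radical supplemented module is g-radical supplemented; consequently every homomorphic image of a g-radical supplemented module is g-radical supplemented. -/
variable {R : Type*} [Ring R] {M : Type*} [AddCommGroup M] [Module R M]

theorem radgIn_map {N : Type*} [AddCommGroup N] [Module R N] (f : M →ₗ[R] N)
    (V : Submodule R M) :
    Submodule.map f (RadgIn V) ≤ RadgIn (Submodule.map f V) := by
  refine le_inf ?_ (Submodule.map_mono (inf_le_right : RadgIn V ≤ V))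
  refine le_sInf fun T' hT' => ?_
  obtain ⟨⟨hT'le, hT'ess⟩, hT'lt, hT'max⟩ := hT'
  set T : Submodule R M := Submodule.comap f T' ⊓ V with hTdef
  have hmapT : Submodule.map f T ≤ T' := by
    rintro y ⟨x, hx, rfl⟩
    exact hx.1
  have hTess : EssIn T V := by
    refine ⟨inf_le_right, fun L hLV hL0 => ?_⟩
    rw [Submodule.ne_bot_iff] at hL0 ⊢
    by_cases hfL : Submodule.map f L = ⊥
    · obtain ⟨x, hxL, hx0⟩ := hL0
      have hfx0 : f x = 0 := by
        have : f x ∈ (⊥ : Submodule R N) := hfL ▸ ⟨x, hxL, rfl⟩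
        simpa using this
      exact ⟨x, ⟨⟨Submodule.mem_comap.mpr (hfx0 ▸ T'.zero_mem), hLV hxL⟩, hxL⟩, hx0⟩
    · have h1 := hT'ess (Submodule.map f L) (Submodule.map_mono hLV) hfL
      rw [Submodule.ne_bot_iff] at h1
      obtain ⟨y, ⟨hyT', z, hzL, rfl⟩, hy0⟩ := h1
      refine ⟨z, ⟨⟨Submodule.mem_comap.mpr hyT', hLV hzL⟩, hzL⟩, ?_⟩
      rintro rfl
      exact hy0 (map_zero f)
  have hTlt : T < V := by
    refine lt_of_le_of_ne inf_le_right fun hTV => ?_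
    have : Submodule.map f V ≤ T' := hTV ▸ hmapT
    exact hT'lt.not_ge this
  have hTmaxS : ∀ S : Submodule R M, T < S → S ≤ V → S = V := by
    intro S hTS hSV
    have h2 : T' < T' ⊔ Submodule.map f S := by
      refine lt_of_le_of_ne le_sup_left fun heq => ?_
      have hmS : Submodule.map f S ≤ T' := heq ▸ le_sup_right
      refine hTS.not_ge (le_inf (fun x hx => Submodule.mem_comap.mpr (hmS ⟨x, hx, rfl⟩)) hSV)
    have h3 : T' ⊔ Submodule.map f S = Submodule.map f V :=
      hT'max _ h2 (sup_le hT'le (Submodule.map_mono hSV))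
    refine le_antisymm hSV fun v hv => ?_
    have : f v ∈ T' ⊔ Submodule.map f S := h3 ▸ ⟨v, hv, rfl⟩
    obtain ⟨t, ht, w, hw, hvw⟩ := Submodule.mem_sup.mp this
    obtain ⟨s, hsS, rfl⟩ := hw
    have hvs : v - s ∈ T := by
      refine ⟨Submodule.mem_comap.mpr ?_, V.sub_mem hv (hSV hsS)⟩
      have : f (v - s) = t := by
        rw [map_sub]
        rw [← hvw]
        abel
      exact this ▸ ht
    have : v - s ∈ S := hTS.le hvs
    simpa using S.add_mem this hsS
  have hRle : RadgIn V ≤ T :=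
    inf_le_left.trans (sInf_le ⟨hTess, hTlt, hTmaxS⟩)
  exact (Submodule.map_mono hRle).trans hmapT

theorem grs_of_surjective {N : Type*} [AddCommGroup N] [Module R N] (f : M →ₗ[R] N)
    (hf : Function.Surjective f) (h : GRS R M) : GRS R N := by
  intro U'
  obtain ⟨V, hUV, hInt⟩ := h (Submodule.comap f U')
  refine ⟨Submodule.map f V, ?_, ?_⟩
  · rw [← Submodule.map_comap_eq_of_surjective hf U', ← Submodule.map_sup, hUV,
      Submodule.map_top, LinearMap.range_eq_top.mpr hf]
  · have hle : U' ⊓ Submodule.map f V ≤ Submodule.map f (Submodule.comap f U' ⊓ V) := by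
      rintro y ⟨hyU, v, hvV, rfl⟩
      exact ⟨v, ⟨Submodule.mem_comap.mpr hyU, hvV⟩, rfl⟩
    exact hle.trans ((Submodule.map_mono hInt).trans (radgIn_map f V))

theorem stmt16 (h : GRS R M) :
    (∀ K : Submodule R M, GRS R (M ⧸ K)) ∧
      (∀ (N : Type*) [AddCommGroup N] [Module R N] (f : M →ₗ[R] N),
        Function.Surjective f → GRS R N) := by
  refine ⟨fun K => grs_of_surjective K.mkQ (Submodule.Quotient.mk_surjective K) h,
    fun N _ _ f hf => grs_of_surjective f hf h⟩
end

section
/- If M is a g-radical supplemented R-module, then M/Rad_g M is semisimple. -/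
variable {R : Type*} [Ring R] {M : Type*} [AddCommGroup M] [Module R M]

lemma radgIn_le_radg (V : Submodule R M) : RadgIn V ≤ Radg R M := by
  apply le_sInf
  rintro T ⟨hess, hcoatom⟩
  by_cases hVT : V ≤ T
  · exact le_trans inf_le_right hVT
  · have hmax : MaxEssIn (T ⊓ V) V := by
      refine ⟨⟨inf_le_right, ?_⟩, ?_, ?_⟩
      · intro L hLV hL
        have heq : (T ⊓ V) ⊓ L = T ⊓ L := by
          rw [inf_assoc, inf_eq_right.mpr hLV]
        rw [heq]
        exact hess L hL
      · exact lt_of_le_of_ne inf_le_right (fun hEq => hVT (hEq ▸ inf_le_left))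
      · intro S hS hSV
        have hST : ¬ S ≤ T := fun hle => absurd (le_inf hle hSV) (not_le_of_gt hS)
        have hTS : T ⊔ S = ⊤ := hcoatom.2 _ (lt_of_le_of_ne le_sup_left
          (fun hEq => hST (hEq ▸ le_sup_right)))
        have : S ⊔ (T ⊓ V) = (S ⊔ T) ⊓ V := (sup_inf_assoc_of_le T hSV).symm
        rw [sup_comm S T, hTS, top_inf_eq] at this
        rw [← this, sup_eq_left.mpr (le_of_lt hS)]
    calc RadgIn V ≤ sInf {T : Submodule R M | MaxEssIn T V} := inf_le_left
      _ ≤ T ⊓ V := sInf_le hmax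
      _ ≤ T := inf_le_left

theorem stmt17 (h : GRS R M) : IsSemisimpleModule R (M ⧸ Radg R M) := by
  refine { exists_isCompl := ?_ }
  intro W
  set π := (Radg R M).mkQ
  obtain ⟨V, hUV, hInf⟩ := h (W.comap π)
  refine ⟨V.map π, ?_, ?_⟩
  · -- disjoint
    rw [disjoint_iff_inf_le]
    rintro x ⟨hxW, hxV⟩
    obtain ⟨v, hv, rfl⟩ := hxV
    have hvU : v ∈ W.comap π := hxW
    have : v ∈ Radg R M := radgIn_le_radg V (hInf ⟨hvU, hv⟩)
    simpa [π, Submodule.Quotient.mk_eq_zero] using this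
  · -- codisjoint
    rw [codisjoint_iff]
    have hW : (W.comap π).map π = W := Submodule.map_comap_eq_self (by
      simp [π, Submodule.range_mkQ])
    calc W ⊔ V.map π = (W.comap π).map π ⊔ V.map π := by rw [hW]
      _ = ((W.comap π) ⊔ V).map π := (Submodule.map_sup _ _ _).symm
      _ = ⊤ := by rw [hUV, Submodule.map_top, Submodule.range_mkQ]
end

section
/- Let M be a g-radical supplemented module and L ≤ M with L ∩ Rad_g M = 0. Then L is semisimple. In particular, a g-radical supplemented module M with Rad_g M = 0 is semisimple. -/
variable {R : Type*} [Ring R] {M : Type*} [AddCommGroup M] [Module R M]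

lemma grs_semisimple_aux (h : GRS R M) (L : Submodule R M) (hL : L ⊓ Radg R M = ⊥) :
    IsSemisimpleModule R ↥L := by
  rw [isSemisimpleModule_iff]
  constructor
  intro X'
  set X : Submodule R M := X'.map L.subtype with hXdef
  have hXL : X ≤ L := Submodule.map_subtype_le L X'
  obtain ⟨V, hsup, hrad⟩ := h X
  have hXV : X ⊓ V = ⊥ := by
    refine le_bot_iff.mp ?_
    rw [← hL]
    exact le_inf (le_trans inf_le_left hXL) (le_trans hrad (radgIn_le_radg V))
  set W : Submodule R M := V ⊓ L with hWdef
  have hXW_sup : X ⊔ W = L := by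
    have := sup_inf_assoc_of_le V hXL
    rw [hWdef, ← this, hsup, top_inf_eq]
  have hXW_inf : X ⊓ W = ⊥ := by
    refine le_bot_iff.mp ?_
    rw [← hXV]
    exact le_inf inf_le_left (le_trans inf_le_right inf_le_left)
  refine ⟨W.comap L.subtype, ?_, ?_⟩
  · rw [disjoint_iff]
    apply Submodule.map_injective_of_injective (L.injective_subtype)
    rw [Submodule.map_inf _ (L.injective_subtype), Submodule.map_bot,
      Submodule.map_comap_subtype, ← hXdef, ← hXW_inf]
    rw [inf_comm L W, inf_of_le_left (inf_le_right : W ≤ L)]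
  · rw [codisjoint_iff]
    apply Submodule.map_injective_of_injective (L.injective_subtype)
    rw [Submodule.map_sup, Submodule.map_comap_subtype, ← hXdef,
      Submodule.map_subtype_top, inf_of_le_right (inf_le_right : W ≤ L), hXW_sup]

theorem stmt18 (h : GRS R M) :
    (∀ L : Submodule R M, L ⊓ Radg R M = ⊥ → IsSemisimpleModule R ↥L) ∧
      (Radg R M = ⊥ → IsSemisimpleModule R M) := by
  refine ⟨fun L hL => grs_semisimple_aux h L hL, fun hrad => ?_⟩
  have : IsSemisimpleModule R ↥(⊤ : Submodule R M) :=
    grs_semisimple_aux h ⊤ (by rw [hrad, inf_bot_eq])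
  exact (isSemisimpleModule_iff R M).mpr (Submodule.orderIsoMapComap (Submodule.topEquiv (R := R) (M := M))).complementedLattice
end

section
/- Let V be a g-radical supplement of U in M. If U is a maximal essential submodule of M, then U ∩ V is the unique maximal essential submodule of V, and Rad_g V = U ∩ V. -/
variable {R : Type*} [Ring R] {M : Type*} [AddCommGroup M] [Module R M]

theorem stmt19 (U V : Submodule R M) (hV : GRadSuppIn U V ⊤)
    (hU : IsEssentialSub U ∧ IsCoatom U) :
    MaxEssIn (U ⊓ V) V ∧ (∀ W : Submodule R M, MaxEssIn W V → W = U ⊓ V) ∧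
      RadgIn V = U ⊓ V := by
  obtain ⟨hsup, hrad⟩ := hV
  obtain ⟨hEss, hCo⟩ := hU
  have hmax : MaxEssIn (U ⊓ V) V := by
    refine ⟨⟨inf_le_right, ?_⟩, ?_, ?_⟩
    · intro L hLV hL hbot
      rw [inf_assoc, inf_eq_right.mpr hLV] at hbot
      exact hEss L hL hbot
    · rcases lt_or_eq_of_le (inf_le_right : U ⊓ V ≤ V) with h | h
      · exact h
      · exfalso
        have hVU : V ≤ U := by rw [← h]; exact inf_le_left
        exact hCo.1 (by rw [← hsup, sup_eq_left.mpr hVU])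
    · intro S hS hSV
      have hSU : ¬ S ≤ U := fun h => absurd (le_inf h hSV) (not_le_of_gt hS)
      have hUS : U ⊔ S = ⊤ := hCo.2 _ (lt_of_le_of_ne le_sup_left
        (fun h => hSU (h ▸ le_sup_right)))
      have : S ⊔ (U ⊓ V) = (S ⊔ U) ⊓ V := (sup_inf_assoc_of_le _ hSV).symm
      rw [sup_eq_left.mpr hS.le, sup_comm, hUS, top_inf_eq] at this
      exact this
  refine ⟨hmax, ?_, ?_⟩
  · intro W hW
    have h1 : U ⊓ V ≤ W := le_trans hrad (le_trans inf_le_left (sInf_le hW))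
    rcases lt_or_eq_of_le h1 with h | h
    · exact absurd (hmax.2.2 W h hW.1.1) (ne_of_lt hW.2.1)
    · exact h.symm
  · refine le_antisymm (le_trans inf_le_left (sInf_le hmax)) hrad
end
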